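/- arXiv:1701.04157 — 11 statements merged into one kernel-verified Lean document; each statement's English description precedes it below -/
import Mathlib

section
/- Let φ, ψ ∈ ℂ. Then both roots of the complex quadratic equation x² − φx + ψ = 0 have modulus less than one if and only if |φ − φ̄ψ| + |ψ|² < 1, where φ̄ denotes the complex conjugate of φ. Equivalently: (∀ x ∈ ℂ, x² − φx + ψ = 0 → |x| < 1) ↔ |φ − φ̄ψ| + |ψ|² < 1. -/
/-!
Write φ = r + s and ψ = r s, where r, s are the roots. Then φ − φ̄ψ = r (1 − |s|²) + s (1 − |r|²)
and |ψ| = |r| |s|, and with a = |r|, b = |s| one has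
1 − (a (1 − b²) + b (1 − a²) + a²b²) = (1 − a)(1 − b)(1 − ab).
If a, b < 1 the product is positive and the triangle inequality bounds |φ − φ̄ψ| above by
a (1 − b²) + b (1 − a²). If a ≥ 1, then ab < 1 forces b < 1, so the product is ≤ 0, while the
triangle inequality bounds |φ − φ̄ψ| below by a (1 − b²) − b (a² − 1).
-/

open Polynomial ComplexConjugate

theorem exists_add_eq_and_mul_eq {K : Type*} [Field K] [IsAlgClosed K] (p q : K) :
    ∃ r s : K, r + s = p ∧ r * s = q := by
  obtain ⟨r, hr⟩ := IsAlgClosed.exists_root (C 1 * X ^ 2 + C (-p) * X + C q)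
    (by rw [degree_quadratic one_ne_zero]; decide)
  refine ⟨r, p - r, by ring, ?_⟩
  simp only [IsRoot, eval_add, eval_mul, eval_C, eval_pow, eval_X] at hr
  linear_combination -hr

section

variable {𝕜 : Type*} [RCLike 𝕜]

theorem add_sub_conj_add_mul_mul_eq (r s : 𝕜) :
    (r + s) - conj (r + s) * (r * s) =
      r * ((1 - ‖s‖ ^ 2 : ℝ) : 𝕜) + s * ((1 - ‖r‖ ^ 2 : ℝ) : 𝕜) := by
  rw [map_add]
  push_cast
  linear_combination (-s) * RCLike.conj_mul r + (-r) * RCLike.conj_mul s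

theorem one_sub_add_add_sq_eq_mul_mul (a b : ℝ) :
    1 - (a * (1 - b ^ 2) + b * (1 - a ^ 2) + (a * b) ^ 2) = (1 - a) * (1 - b) * (1 - a * b) := by
  ring

theorem norm_mul_ofReal_add_mul_ofReal_add_sq_lt_one {r s : 𝕜} (hr : ‖r‖ < 1) (hs : ‖s‖ < 1) :
    ‖r * ((1 - ‖s‖ ^ 2 : ℝ) : 𝕜) + s * ((1 - ‖r‖ ^ 2 : ℝ) : 𝕜)‖ + (‖r‖ * ‖s‖) ^ 2 < 1 := by
  have ha := norm_nonneg r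
  have hb := norm_nonneg s
  have htri := norm_add_le (r * ((1 - ‖s‖ ^ 2 : ℝ) : 𝕜)) (s * ((1 - ‖r‖ ^ 2 : ℝ) : 𝕜))
  rw [norm_mul, norm_mul, RCLike.norm_ofReal, RCLike.norm_ofReal,
    abs_of_nonneg (by nlinarith), abs_of_nonneg (by nlinarith)] at htri
  have hpos : 0 < (1 - ‖r‖) * (1 - ‖s‖) * (1 - ‖r‖ * ‖s‖) :=
    mul_pos (mul_pos (by linarith) (by linarith)) (by nlinarith)
  linarith [one_sub_add_add_sq_eq_mul_mul ‖r‖ ‖s‖]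

theorem norm_lt_one_of_norm_mul_ofReal_add_mul_ofReal_add_sq_lt_one {r s : 𝕜}
    (h : ‖r * ((1 - ‖s‖ ^ 2 : ℝ) : 𝕜) + s * ((1 - ‖r‖ ^ 2 : ℝ) : 𝕜)‖ + (‖r‖ * ‖s‖) ^ 2 < 1) :
    ‖r‖ < 1 := by
  by_contra! hr
  have hb := norm_nonneg s
  have hX := norm_nonneg (r * ((1 - ‖s‖ ^ 2 : ℝ) : 𝕜) + s * ((1 - ‖r‖ ^ 2 : ℝ) : 𝕜))
  have hab : ‖r‖ * ‖s‖ < 1 := by nlinarith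
  have hs : ‖s‖ < 1 := by nlinarith
  have htri := norm_sub_le (r * ((1 - ‖s‖ ^ 2 : ℝ) : 𝕜) + s * ((1 - ‖r‖ ^ 2 : ℝ) : 𝕜))
    (s * ((1 - ‖r‖ ^ 2 : ℝ) : 𝕜))
  rw [add_sub_cancel_right, norm_mul, norm_mul, RCLike.norm_ofReal, RCLike.norm_ofReal,
    abs_of_nonneg (by nlinarith), abs_of_nonpos (by nlinarith)] at htri
  have hnonneg : 0 ≤ (‖r‖ - 1) * (1 - ‖s‖) * (1 - ‖r‖ * ‖s‖) :=
    mul_nonneg (mul_nonneg (by linarith) (by linarith)) (by linarith)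
  linarith [one_sub_add_add_sq_eq_mul_mul ‖r‖ ‖s‖]

theorem norm_lt_one_and_norm_lt_one_iff (r s : 𝕜) :
    ‖r‖ < 1 ∧ ‖s‖ < 1 ↔ ‖(r + s) - conj (r + s) * (r * s)‖ + ‖r * s‖ ^ 2 < 1 := by
  rw [add_sub_conj_add_mul_mul_eq, norm_mul]
  refine ⟨fun ⟨hr, hs⟩ ↦ norm_mul_ofReal_add_mul_ofReal_add_sq_lt_one hr hs, fun h ↦ ⟨?_, ?_⟩⟩
  · exact norm_lt_one_of_norm_mul_ofReal_add_mul_ofReal_add_sq_lt_one h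
  · rw [add_comm (r * _), mul_comm ‖r‖] at h
    exact norm_lt_one_of_norm_mul_ofReal_add_mul_ofReal_add_sq_lt_one h

end

/-- Lemma 3.1: both roots of the complex quadratic `x² − φx + ψ = 0` are of modulus
less than one if and only if `|φ − φ̄ψ| + |ψ|² < 1`. -/
theorem quadratic_roots_modulus_lt_one_iff (φ ψ : ℂ) :
    (∀ x : ℂ, x ^ 2 - φ * x + ψ = 0 → ‖x‖ < 1) ↔
      ‖φ - (starRingEnd ℂ) φ * ψ‖ + (‖ψ‖) ^ 2 < 1 := by
  obtain ⟨r, s, rfl, rfl⟩ := exists_add_eq_and_mul_eq φ ψ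
  have hfactor (x : ℂ) : x ^ 2 - (r + s) * x + r * s = (x - r) * (x - s) := by ring
  simp only [hfactor, mul_eq_zero, sub_eq_zero, ← norm_lt_one_and_norm_lt_one_iff]
  constructor
  · intro h
    exact ⟨h r (Or.inl rfl), h s (Or.inr rfl)⟩
  · rintro ⟨hr, hs⟩ x (rfl | rfl) <;> assumption
end

section
/- Let A ∈ ℝ^{m×m} be positive definite, meaning xᵀAx > 0 for every nonzero x ∈ ℝ^m (A need not be symmetric), let B ∈ ℝ^{m×n} have full column rank (rank B = n), and let α ≥ 0, β > 0. If λ ∈ ℂ and there exists a nonzero w ∈ ℂ^{m+n} with Q(α,β)w = λ P(α,β)w (i.e., λ is an eigenvalue of the MGSSP iteration matrix T(α,β) = P(α,β)⁻¹Q(α,β)), then λ ≠ 1 and λ ≠ −1. -/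
open Matrix

/-- The MGSSP splitting matrix `P(α,β) = [[αI+2A, 2B], [−2Bᵀ, βI]]`. -/
noncomputable def Pmat {m n : ℕ} (A : Matrix (Fin m) (Fin m) ℝ) (B : Matrix (Fin m) (Fin n) ℝ)
    (α β : ℝ) : Matrix (Fin m ⊕ Fin n) (Fin m ⊕ Fin n) ℝ :=
  fromBlocks (α • 1 + (2 : ℝ) • A) ((2 : ℝ) • B) (-((2 : ℝ) • Bᵀ)) (β • 1)

/-- The MGSSP splitting matrix `Q(α,β) = [[αI+A, B], [−Bᵀ, βI]]`. -/
noncomputable def Qmat {m n : ℕ} (A : Matrix (Fin m) (Fin m) ℝ) (B : Matrix (Fin m) (Fin n) ℝ)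
    (α β : ℝ) : Matrix (Fin m ⊕ Fin n) (Fin m ⊕ Fin n) ℝ :=
  fromBlocks (α • 1 + A) B (-Bᵀ) (β • 1)

section Aux

lemma mgssp_re_quad {m : ℕ} (A : Matrix (Fin m) (Fin m) ℝ) (u : Fin m → ℂ) :
    (star u ⬝ᵥ (A.map Complex.ofReal *ᵥ u)).re
      = (fun i => (u i).re) ⬝ᵥ (A *ᵥ fun i => (u i).re)
        + (fun i => (u i).im) ⬝ᵥ (A *ᵥ fun i => (u i).im) := by
  simp only [dotProduct, mulVec, map_apply, Pi.star_apply, Complex.re_sum, Finset.mul_sum,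
    ← Finset.sum_add_distrib, Complex.mul_re, Complex.mul_im, Complex.ofReal_re,
    Complex.ofReal_im, RCLike.star_def, Complex.conj_re, Complex.conj_im]
  refine Finset.sum_congr rfl fun i _ => Finset.sum_congr rfl fun j _ => by ring

lemma mgssp_pd_complex {m : ℕ} (A : Matrix (Fin m) (Fin m) ℝ)
    (hA : ∀ x : Fin m → ℝ, x ≠ 0 → 0 < x ⬝ᵥ (A *ᵥ x))
    (u : Fin m → ℂ) (hu : u ≠ 0) :
    0 < (star u ⬝ᵥ (A.map Complex.ofReal *ᵥ u)).re := by
  rw [mgssp_re_quad]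
  have hnn : ∀ x : Fin m → ℝ, 0 ≤ x ⬝ᵥ (A *ᵥ x) := by
    intro x
    by_cases hx : x = 0
    · simp [hx]
    · exact (hA x hx).le
  have : (fun i => (u i).re) ≠ 0 ∨ (fun i => (u i).im) ≠ 0 := by
    by_contra h
    push_neg at h
    apply hu
    funext i
    have h1 := congrFun h.1 i
    have h2 := congrFun h.2 i
    simp only [Pi.zero_apply] at h1 h2 ⊢
    exact Complex.ext h1 h2
  rcases this with h | h
  · exact add_pos_of_pos_of_nonneg (hA _ h) (hnn _)
  · exact add_pos_of_nonneg_of_pos (hnn _) (hA _ h)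

lemma mgssp_re_dot_self_nonneg {k : ℕ} (x : Fin k → ℂ) : 0 ≤ (star x ⬝ᵥ x).re := by
  simp only [dotProduct, Pi.star_apply, Complex.re_sum, RCLike.star_def,
    Complex.mul_re, Complex.conj_re, Complex.conj_im]
  apply Finset.sum_nonneg
  intro i _
  nlinarith [sq_nonneg (x i).re, sq_nonneg (x i).im]

lemma mgssp_rank_inj {m n : ℕ} (B : Matrix (Fin m) (Fin n) ℝ) (hB : B.rank = n)
    {x : Fin n → ℝ} (hx : B *ᵥ x = 0) : x = 0 := by
  have h := LinearMap.finrank_range_add_finrank_ker B.mulVecLin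
  rw [Matrix.rank] at hB
  have hdom : Module.finrank ℝ (Fin n → ℝ) = n := Module.finrank_fin_fun ℝ
  have hker0 : Module.finrank ℝ (LinearMap.ker B.mulVecLin) = 0 := by omega
  have hker : LinearMap.ker B.mulVecLin = ⊥ := Submodule.finrank_eq_zero.mp hker0
  have hmem : x ∈ LinearMap.ker B.mulVecLin := by
    simpa [LinearMap.mem_ker, mulVecLin_apply] using hx
  simpa [hker] using hmem

lemma mgssp_rank_inj_c {m n : ℕ} (B : Matrix (Fin m) (Fin n) ℝ) (hB : B.rank = n)
    {v : Fin n → ℂ} (hv : B.map Complex.ofReal *ᵥ v = 0) : v = 0 := by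
  have hre : B *ᵥ (fun j => (v j).re) = 0 := by
    funext i
    have h := congrArg Complex.re (congrFun hv i)
    simpa [mulVec, dotProduct, map_apply, Complex.re_sum, Complex.mul_re,
      Complex.ofReal_re, Complex.ofReal_im] using h
  have him : B *ᵥ (fun j => (v j).im) = 0 := by
    funext i
    have h := congrArg Complex.im (congrFun hv i)
    simpa [mulVec, dotProduct, map_apply, Complex.im_sum, Complex.mul_im,
      Complex.ofReal_re, Complex.ofReal_im] using h
  have h1 := mgssp_rank_inj B hB hre
  have h2 := mgssp_rank_inj B hB him
  funext j
  have e1 := congrFun h1 j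
  have e2 := congrFun h2 j
  simp only [Pi.zero_apply] at e1 e2 ⊢
  exact Complex.ext e1 e2

end Aux

/-- Lemma 3.2: no eigenvalue of the MGSSP iteration matrix equals `1` or `−1`. -/
theorem mgssp_eigenvalue_ne_one_neg_one {m n : ℕ}
    (A : Matrix (Fin m) (Fin m) ℝ) (B : Matrix (Fin m) (Fin n) ℝ)
    (hA : ∀ x : Fin m → ℝ, x ≠ 0 → 0 < x ⬝ᵥ (A *ᵥ x))
    (hB : B.rank = n)
    (α β : ℝ) (hα : 0 ≤ α) (hβ : 0 < β)
    (lam : ℂ) (w : Fin m ⊕ Fin n → ℂ) (hw : w ≠ 0)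
    (heig : (Qmat A B α β).map Complex.ofReal *ᵥ w
        = lam • ((Pmat A B α β).map Complex.ofReal *ᵥ w)) :
    lam ≠ 1 ∧ lam ≠ -1 := by
  set A' : Matrix (Fin m) (Fin m) ℂ := A.map Complex.ofReal with hA'
  set B' : Matrix (Fin m) (Fin n) ℂ := B.map Complex.ofReal with hB'
  set C' : Matrix (Fin n) (Fin m) ℂ := Bᵀ.map Complex.ofReal with hC'
  set u : Fin m → ℂ := fun i => w (Sum.inl i) with hu
  set v : Fin n → ℂ := fun j => w (Sum.inr j) with hv
  have hw' : w = Sum.elim u v := by funext x; cases x <;> rfl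
  have hm1 : (α • (1 : Matrix (Fin m) (Fin m) ℝ) + A).map Complex.ofReal
      = (α : ℂ) • 1 + A' := by
    ext i j; by_cases h : i = j <;> simp [Matrix.one_apply, h, hA']
  have hm1' : (α • (1 : Matrix (Fin m) (Fin m) ℝ) + (2:ℝ) • A).map Complex.ofReal
      = (α : ℂ) • 1 + (2 : ℂ) • A' := by
    ext i j; by_cases h : i = j <;> simp [Matrix.one_apply, h, hA']
  have hm2 : B.map Complex.ofReal = B' := rfl
  have hm2' : ((2:ℝ) • B).map Complex.ofReal = (2 : ℂ) • B' := by
    ext i j; simp [hB']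
  have hm3 : (-Bᵀ).map Complex.ofReal = -C' := by
    ext i j; simp [hC']
  have hm3' : (-((2:ℝ) • Bᵀ)).map Complex.ofReal = -((2 : ℂ) • C') := by
    ext i j; simp [hC']
  have hm4 : (β • (1 : Matrix (Fin n) (Fin n) ℝ)).map Complex.ofReal
      = (β : ℂ) • (1 : Matrix (Fin n) (Fin n) ℂ) := by
    ext i j; by_cases h : i = j <;> simp [Matrix.one_apply, h]
  have hQ : (Qmat A B α β).map Complex.ofReal
      = fromBlocks ((α : ℂ) • 1 + A') B' (-C') ((β : ℂ) • 1) := by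
    unfold Qmat; rw [fromBlocks_map, hm1, hm2, hm3, hm4]
  have hP : (Pmat A B α β).map Complex.ofReal
      = fromBlocks ((α : ℂ) • 1 + (2 : ℂ) • A') ((2 : ℂ) • B') (-((2 : ℂ) • C'))
          ((β : ℂ) • 1) := by
    unfold Pmat; rw [fromBlocks_map, hm1', hm2', hm3', hm4]
  rw [hQ, hP, hw', fromBlocks_mulVec, fromBlocks_mulVec] at heig
  simp only [Sum.elim_comp_inl, Sum.elim_comp_inr] at heig
  have htop : ∀ i, (α : ℂ) * u i + (A' *ᵥ u) i + (B' *ᵥ v) i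
      = lam * ((α : ℂ) * u i + 2 * (A' *ᵥ u) i + 2 * (B' *ᵥ v) i) := by
    intro i
    have h := congrFun heig (Sum.inl i)
    simp only [Sum.elim_inl, Pi.smul_apply, Pi.add_apply, add_mulVec, smul_mulVec,
      one_mulVec, neg_mulVec, Pi.neg_apply, smul_eq_mul] at h
    linear_combination h
  have hbot : ∀ j, -(C' *ᵥ u) j + (β : ℂ) * v j
      = lam * (-(2 * (C' *ᵥ u) j) + (β : ℂ) * v j) := by
    intro j
    have h := congrFun heig (Sum.inr j)
    simp only [Sum.elim_inr, Pi.smul_apply, Pi.add_apply, add_mulVec, smul_mulVec,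
      one_mulVec, neg_mulVec, Pi.neg_apply, smul_eq_mul] at h
    linear_combination h
  have hdot : star u ⬝ᵥ (B' *ᵥ v) = star (C' *ᵥ u) ⬝ᵥ v := by
    rw [dotProduct_mulVec]
    congr 1
    funext j
    simp [vecMul, mulVec, dotProduct, Pi.star_apply, star_sum, star_mul',
      Complex.conj_ofReal, map_apply, RCLike.star_def, hB', hC', mul_comm]
  constructor
  · rintro rfl
    -- λ = 1
    have e1 : A' *ᵥ u + B' *ᵥ v = 0 := by
      funext i
      have h := htop i
      simp only [Pi.add_apply, Pi.zero_apply]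
      linear_combination -h
    have e2 : C' *ᵥ u = 0 := by
      funext j
      have h := hbot j
      simp only [Pi.zero_apply]
      linear_combination h
    have hq : star u ⬝ᵥ (A' *ᵥ u) = 0 := by
      have h0 : star u ⬝ᵥ (A' *ᵥ u) + star u ⬝ᵥ (B' *ᵥ v) = 0 := by
        rw [← dotProduct_add, e1, dotProduct_zero]
      rw [hdot, e2] at h0
      simpa using h0
    have hu0 : u = 0 := by
      by_contra hne
      have hpos := mgssp_pd_complex A hA u hne
      rw [← hA', hq] at hpos
      simp at hpos
    have hv0 : v = 0 := by
      apply mgssp_rank_inj_c B hB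
      have hBv : B' *ᵥ v = 0 := by
        have h := e1
        rw [hu0] at h
        simpa using h
      rw [← hB']
      exact hBv
    exact hw (by rw [hw', hu0, hv0]; funext x; cases x <;> simp)
  · rintro rfl
    -- λ = -1
    have e1 : ∀ i, 2 * (α : ℂ) * u i + 3 * (A' *ᵥ u) i + 3 * (B' *ᵥ v) i = 0 := by
      intro i
      have h := htop i
      linear_combination h
    have e2 : ∀ j, 2 * (β : ℂ) * v j = 3 * (C' *ᵥ u) j := by
      intro j
      have h := hbot j
      linear_combination h
    set s : ℂ := star u ⬝ᵥ u with hs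
    set q : ℂ := star u ⬝ᵥ (A' *ᵥ u) with hqdef
    set p : ℂ := star u ⬝ᵥ (B' *ᵥ v) with hpdef
    set r : ℂ := star (C' *ᵥ u) ⬝ᵥ (C' *ᵥ u) with hrdef
    have c1 : 2 * (α : ℂ) * s + 3 * q + 3 * p = 0 := by
      have h0 : star u ⬝ᵥ (fun i => 2 * (α : ℂ) * u i + 3 * (A' *ᵥ u) i + 3 * (B' *ᵥ v) i)
          = 0 := by
        have hz : (fun i => 2 * (α : ℂ) * u i + 3 * (A' *ᵥ u) i + 3 * (B' *ᵥ v) i)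
            = (0 : Fin m → ℂ) := funext e1
        rw [hz, dotProduct_zero]
      rw [hs, hqdef, hpdef]
      simp only [dotProduct, Pi.star_apply] at h0 ⊢
      rw [← h0]
      simp only [Finset.mul_sum, ← Finset.sum_add_distrib]
      refine Finset.sum_congr rfl fun i _ => by ring
    have c2 : 2 * (β : ℂ) * p = 3 * r := by
      rw [hdot, hrdef]
      simp only [dotProduct, Pi.star_apply, Finset.mul_sum]
      calc ∑ j, 2 * (β : ℂ) * (star ((C' *ᵥ u) j) * v j)
          = ∑ j, star ((C' *ᵥ u) j) * (2 * (β : ℂ) * v j) := by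
            refine Finset.sum_congr rfl fun j _ => by ring
        _ = ∑ j, star ((C' *ᵥ u) j) * (3 * (C' *ᵥ u) j) := by
            refine Finset.sum_congr rfl fun j _ => by rw [e2 j]
        _ = ∑ j, 3 * (star ((C' *ᵥ u) j) * (C' *ᵥ u) j) := by
            refine Finset.sum_congr rfl fun j _ => by ring
    have final : 4 * (α : ℂ) * (β : ℂ) * s + 6 * (β : ℂ) * q + 9 * r = 0 := by
      linear_combination 2 * (β : ℂ) * c1 - 3 * c2
    have hre := congrArg Complex.re final
    simp only [Complex.add_re, Complex.mul_re, Complex.mul_im, Complex.ofReal_re,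
      Complex.ofReal_im, Complex.zero_re, Complex.re_ofNat, Complex.im_ofNat,
      mul_zero, zero_mul, sub_zero, zero_sub, add_zero, zero_add, neg_zero] at hre
    have hsnn : 0 ≤ s.re := mgssp_re_dot_self_nonneg u
    have hrnn : 0 ≤ r.re := mgssp_re_dot_self_nonneg (C' *ᵥ u)
    have hu0 : u = 0 := by
      by_contra hne
      have hqpos : 0 < q.re := by
        have hpos := mgssp_pd_complex A hA u hne
        rw [← hA'] at hpos
        rw [hqdef]
        exact hpos
      nlinarith [mul_nonneg (mul_nonneg hα hβ.le) hsnn, mul_pos hβ hqpos]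
    have hv0 : v = 0 := by
      funext j
      have h := e2 j
      rw [hu0] at h
      simp only [mulVec_zero, Pi.zero_apply, mul_zero] at h
      have hb : (β : ℂ) ≠ 0 := Complex.ofReal_ne_zero.mpr hβ.ne'
      have h2 : (2 : ℂ) * (β : ℂ) ≠ 0 := mul_ne_zero two_ne_zero hb
      simpa [Pi.zero_apply] using (mul_eq_zero.mp h).resolve_left h2
    exact hw (by rw [hw', hu0, hv0]; funext x; cases x <;> simp)
end

section
/- Let A ∈ ℝ^{m×m} be positive definite, meaning xᵀAx > 0 for every nonzero x ∈ ℝ^m (A need not be symmetric), let B ∈ ℝ^{m×n} have full column rank (rank B = n), and let α ≥ 0, β > 0. If λ ∈ ℂ and w = (u, v) ∈ ℂ^{m+n} is nonzero with Q(α,β)w = λ P(α,β)w (so (λ, w) is an eigenpair of the MGSSP iteration matrix), then the first block component satisfies u ≠ 0. -/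
open Matrix

-- auxiliary lemmas
lemma rank_inj {m n : ℕ} (B : Matrix (Fin m) (Fin n) ℝ) (hB : B.rank = n)
    (x : Fin n → ℝ) (hx : B *ᵥ x = 0) : x = 0 := by
  have h := LinearMap.finrank_range_add_finrank_ker B.mulVecLin
  rw [Matrix.rank] at hB
  rw [hB] at h
  simp [Module.finrank_fintype_fun_eq_card] at h
  have := LinearMap.ker_eq_bot.mp h
  exact this (a₂ := 0) (by simpa [Matrix.mulVecLin] using hx)

lemma cinj {m n : ℕ} (B : Matrix (Fin m) (Fin n) ℝ) (hB : B.rank = n)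
    (v : Fin n → ℂ) (hv : (B.map Complex.ofReal) *ᵥ v = 0) : v = 0 := by
  have hre : B *ᵥ (fun j => (v j).re) = 0 := by
    funext i
    have := congrFun hv i
    have := congrArg Complex.re this
    simpa [Matrix.mulVec, dotProduct, Complex.re_sum] using this
  have him : B *ᵥ (fun j => (v j).im) = 0 := by
    funext i
    have := congrFun hv i
    have := congrArg Complex.im this
    simpa [Matrix.mulVec, dotProduct, Complex.im_sum] using this
  have h1 := rank_inj B hB _ hre
  have h2 := rank_inj B hB _ him
  funext j
  have e1 := congrFun h1 j
  have e2 := congrFun h2 j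
  simp at e1 e2
  exact Complex.ext e1 e2

/-- Lemma 3.3 (first part): the first block component of an eigenvector of the MGSSP
iteration matrix is nonzero. -/
theorem mgssp_eigenvector_first_block_ne_zero {m n : ℕ}
    (A : Matrix (Fin m) (Fin m) ℝ) (B : Matrix (Fin m) (Fin n) ℝ)
    (hA : ∀ x : Fin m → ℝ, x ≠ 0 → 0 < x ⬝ᵥ (A *ᵥ x))
    (hB : B.rank = n)
    (α β : ℝ) (hα : 0 ≤ α) (hβ : 0 < β)
    (lam : ℂ) (u : Fin m → ℂ) (v : Fin n → ℂ) (hw : Sum.elim u v ≠ 0)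
    (heig : (Qmat A B α β).map Complex.ofReal *ᵥ Sum.elim u v
        = lam • ((Pmat A B α β).map Complex.ofReal *ᵥ Sum.elim u v)) :
    u ≠ 0 := by
  intro hu
  subst hu
  have hv : v ≠ 0 := by
    intro h; apply hw; funext i; cases i <;> simp [h]
  rw [Qmat, Pmat] at heig
  simp only [Matrix.fromBlocks_map, Matrix.fromBlocks_mulVec] at heig
  obtain ⟨j0, hj0⟩ : ∃ j, v j ≠ 0 := by
    by_contra h; push_neg at h; exact hv (funext h)
  have hbot := congrFun heig (Sum.inr j0)
  simp [Matrix.mulVec_zero, Matrix.map_smul, Matrix.smul_mulVec,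
    Matrix.mulVec_one] at hbot
  -- hbot should give (β:ℂ) * v j0 = lam * ((β:ℂ) * v j0)
  have hlam : lam = 1 := by
    have hβv : (β : ℂ) * v j0 ≠ 0 := by
      exact mul_ne_zero (by exact_mod_cast hβ.ne') hj0
    have h1 : lam * (↑β * v j0) = 1 * (↑β * v j0) := by rw [one_mul]; exact hbot.symm
    exact mul_right_cancel₀ hβv h1
  subst hlam
  have htop : ∀ i, ((B.map Complex.ofReal) *ᵥ v) i
      = 2 * ((B.map Complex.ofReal) *ᵥ v) i := by
    intro i
    have h := congrFun heig (Sum.inl i)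
    simpa [Matrix.mulVec_zero, Matrix.map_smul, Matrix.smul_mulVec] using h
  have hz : (B.map Complex.ofReal) *ᵥ v = 0 := by
    funext i
    have := htop i
    have : ((B.map Complex.ofReal) *ᵥ v) i = 0 := by linear_combination -this
    simpa using this
  exact hv (cinj B hB v hz)
end

section
/- Let A ∈ ℝ^{m×m} be positive definite, meaning xᵀAx > 0 for every nonzero x ∈ ℝ^m (A need not be symmetric), let B ∈ ℝ^{m×n} have full column rank (rank B = n), and let α ≥ 0, β > 0. If λ ∈ ℂ and w = (u, v) ∈ ℂ^{m+n} is nonzero with Q(α,β)w = λ P(α,β)w and the second block component vanishes, v = 0, then |λ| < 1. -/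
open Matrix

/-!
With `v = 0` the first block row of `Q w = λ P w` reads `(αI + A) u = λ (αI + 2A) u`. Pairing
with `u` gives `a + c = λ (a + 2c)` where `a = α ‖u‖² ≥ 0` and `c = u* A u` has `Re c > 0`
by positive definiteness of `A`. Then `|a + c| < |a + 2c|`, hence `|λ| < 1`.
-/

section

variable {ι : Type*} [Fintype ι]

theorem Matrix.re_star_dotProduct_map_ofReal_mulVec (A : Matrix ι ι ℝ) (u : ι → ℂ) :
    (star u ⬝ᵥ (A.map Complex.ofReal *ᵥ u)).re =
      (fun i ↦ (u i).re) ⬝ᵥ (A *ᵥ fun i ↦ (u i).re) +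
        (fun i ↦ (u i).im) ⬝ᵥ (A *ᵥ fun i ↦ (u i).im) := by
  simp only [dotProduct, mulVec, map_apply, Pi.star_apply, Complex.re_sum, Finset.mul_sum,
    Complex.mul_re, Complex.star_def, Complex.conj_re, Complex.conj_im, Complex.ofReal_re,
    Complex.mul_im, Complex.ofReal_im, ← Finset.sum_add_distrib]
  refine Finset.sum_congr rfl fun i _ ↦ Finset.sum_congr rfl fun j _ ↦ ?_
  ring

theorem Matrix.re_star_dotProduct_map_ofReal_mulVec_pos {A : Matrix ι ι ℝ}
    (hA : ∀ x : ι → ℝ, x ≠ 0 → 0 < x ⬝ᵥ (A *ᵥ x)) {u : ι → ℂ} (hu : u ≠ 0) :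
    0 < (star u ⬝ᵥ (A.map Complex.ofReal *ᵥ u)).re := by
  have hA' (x : ι → ℝ) : 0 ≤ x ⬝ᵥ (A *ᵥ x) := by
    rcases eq_or_ne x 0 with rfl | hx
    · simp
    · exact (hA x hx).le
  rw [re_star_dotProduct_map_ofReal_mulVec]
  by_cases hre : (fun i ↦ (u i).re) = 0
  · have him : (fun i ↦ (u i).im) ≠ 0 := fun him ↦
      hu <| funext fun i ↦ Complex.ext (congrFun hre i) (congrFun him i)
    linarith [hA' fun i ↦ (u i).re, hA _ him]
  · linarith [hA _ hre, hA' fun i ↦ (u i).im]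

theorem Matrix.star_dotProduct_map_ofReal_smul_one_add_mulVec [DecidableEq ι] (a : ℝ)
    (M : Matrix ι ι ℝ) (u : ι → ℂ) :
    star u ⬝ᵥ ((a • 1 + M).map Complex.ofReal *ᵥ u) =
      a * (star u ⬝ᵥ u) + star u ⬝ᵥ (M.map Complex.ofReal *ᵥ u) := by
  have hmap : (a • 1 + M).map Complex.ofReal = (a : ℂ) • 1 + M.map Complex.ofReal := by
    ext i j
    simp [one_apply, apply_ite]
  rw [hmap, add_mulVec, smul_mulVec, one_mulVec, dotProduct_add, dotProduct_smul, smul_eq_mul]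

theorem Matrix.star_dotProduct_map_ofReal_smul_mulVec (k : ℝ) (M : Matrix ι ι ℝ) (u : ι → ℂ) :
    star u ⬝ᵥ ((k • M).map Complex.ofReal *ᵥ u) = k * (star u ⬝ᵥ (M.map Complex.ofReal *ᵥ u)) := by
  have hmap : (k • M).map Complex.ofReal = (k : ℂ) • M.map Complex.ofReal := by
    ext i j
    simp
  rw [hmap, smul_mulVec, dotProduct_smul, smul_eq_mul]

end

theorem Matrix.fromBlocks_mulVec_sum_elim_zero_inl {l m n o α : Type*} [Fintype l] [Fintype m]
    [NonUnitalNonAssocSemiring α] (A : Matrix n l α) (B : Matrix n m α) (C : Matrix o l α)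
    (D : Matrix o m α) (u : l → α) (i : n) :
    (fromBlocks A B C D *ᵥ Sum.elim u 0) (Sum.inl i) = (A *ᵥ u) i := by
  simp [fromBlocks_mulVec]

open ComplexOrder in
theorem Complex.norm_add_lt_norm_add_two_mul {a c : ℂ} (ha : 0 ≤ a) (hc : 0 < c.re) :
    ‖a + c‖ < ‖a + 2 * c‖ := by
  obtain ⟨ha_re, ha_im⟩ := Complex.nonneg_iff.mp ha
  rw [← sq_lt_sq₀ (norm_nonneg _) (norm_nonneg _), Complex.sq_norm, Complex.sq_norm,
    Complex.normSq_apply, Complex.normSq_apply]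
  simp only [add_re, add_im, mul_re, mul_im, ← ha_im, re_ofNat, im_ofNat, zero_mul, sub_zero,
    zero_add, add_zero]
  nlinarith [sq_nonneg c.im]

theorem mgssp_eigenvalue_abs_lt_one_of_second_block_zero_general {m n : ℕ}
    (A : Matrix (Fin m) (Fin m) ℝ) (B : Matrix (Fin m) (Fin n) ℝ)
    (hA : ∀ x : Fin m → ℝ, x ≠ 0 → 0 < x ⬝ᵥ (A *ᵥ x))
    (α β : ℝ) (hα : 0 ≤ α)
    (lam : ℂ) (u : Fin m → ℂ) (v : Fin n → ℂ) (hw : Sum.elim u v ≠ 0)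
    (heig : (Qmat A B α β).map Complex.ofReal *ᵥ Sum.elim u v
        = lam • ((Pmat A B α β).map Complex.ofReal *ᵥ Sum.elim u v))
    (hv : v = 0) :
    ‖lam‖ < 1 := by
  subst hv
  have hu : u ≠ 0 := by rintro rfl; exact hw Sum.elim_zero_zero
  have htop : (α • 1 + A).map Complex.ofReal *ᵥ u
      = lam • ((α • 1 + (2 : ℝ) • A).map Complex.ofReal *ᵥ u) := funext fun i ↦ by
    simpa only [Qmat, Pmat, fromBlocks_map, fromBlocks_mulVec_sum_elim_zero_inl, Pi.smul_apply] using
      congrFun heig (Sum.inl i)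
  have hrayleigh := congrArg (star u ⬝ᵥ ·) htop
  simp only [dotProduct_smul, smul_eq_mul, star_dotProduct_map_ofReal_smul_one_add_mulVec,
    star_dotProduct_map_ofReal_smul_mulVec] at hrayleigh
  have hlt := open ComplexOrder in Complex.norm_add_lt_norm_add_two_mul
    (mul_nonneg (Complex.zero_le_real.mpr hα) (dotProduct_star_self_nonneg u))
    (re_star_dotProduct_map_ofReal_mulVec_pos hA hu)
  rw [hrayleigh, norm_mul] at hlt
  push_cast at hlt
  exact lt_of_mul_lt_mul_right (by rwa [one_mul]) (norm_nonneg _)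

/-- Lemma 3.3 (second part): if the second block component of an eigenvector of the
MGSSP iteration matrix vanishes, then the corresponding eigenvalue has modulus less
than one. -/
theorem mgssp_eigenvalue_abs_lt_one_of_second_block_zero {m n : ℕ}
    (A : Matrix (Fin m) (Fin m) ℝ) (B : Matrix (Fin m) (Fin n) ℝ)
    (hA : ∀ x : Fin m → ℝ, x ≠ 0 → 0 < x ⬝ᵥ (A *ᵥ x))
    (hB : B.rank = n)
    (α β : ℝ) (hα : 0 ≤ α) (hβ : 0 < β)
    (lam : ℂ) (u : Fin m → ℂ) (v : Fin n → ℂ) (hw : Sum.elim u v ≠ 0)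
    (heig : (Qmat A B α β).map Complex.ofReal *ᵥ Sum.elim u v
        = lam • ((Pmat A B α β).map Complex.ofReal *ᵥ Sum.elim u v))
    (hv : v = 0) :
    ‖lam‖ < 1 :=
  mgssp_eigenvalue_abs_lt_one_of_second_block_zero_general A B hA α β hα lam u v hw heig hv
end

section
/- Let A ∈ ℝ^{m×m} be positive definite, meaning xᵀAx > 0 for every nonzero x ∈ ℝ^m (A need not be symmetric), let B ∈ ℝ^{m×n} have full column rank (rank B = n), and let α ≥ 0, β > 0. Suppose λ ∈ ℂ and w = (u, v) ∈ ℂ^{m+n} is nonzero with Q(α,β)w = λ P(α,β)w. Define the Rayleigh quotients a + ib = (u*Au)/(u*u) with a, b ∈ ℝ, and c = (u*BBᵀu)/(u*u) ∈ ℝ (u ≠ 0 so these are well defined). Then λ satisfies the scalar quadratic equation λ²(αβ + 2βa + 4c + 2βbi) − λ(2αβ + 3βa + 4c + 3βbi) + (αβ + βa + c + βbi) = 0. -/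
/-!
Write `Q w = λ P w` blockwise. Pairing the first block row with `u*` and applying `u* B` to the
second block row gives two scalar equations that are linear in the unknown `u* B v`;
eliminating it leaves `λ² (αβ s + 2β p + 4r) − λ (2αβ s + 3β p + 4r) + (αβ s + β p + r) = 0`
with `s = u* u`, `p = u* A u`, `r = u* B Bᵀ u`, and dividing by `s` gives the claim. Here `s ≠ 0`
because `u ≠ 0`: if `u = 0`, the second block row forces `λ = 1` (as `β ≠ 0`), and then the first
reads `B v = 2 B v`, so `v = 0` by injectivity of `B`.
-/

open Matrix

theorem Sum.smul_elim {ι κ M R : Type*} [SMul R M] (c : R) (f : ι → M) (g : κ → M) :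
    c • Sum.elim f g = Sum.elim (c • f) (c • g) := by
  ext (i | j) <;> rfl

namespace Matrix

variable {m n : Type*}

theorem mulVec_injective_of_rank_eq_card [Fintype n] {K : Type*} [Field K] {B : Matrix m n K}
    (hB : B.rank = Fintype.card n) : Function.Injective B.mulVec := by
  have hker : Module.finrank K (LinearMap.ker B.mulVecLin) = 0 := by
    have := LinearMap.finrank_range_add_finrank_ker B.mulVecLin
    rw [← rank, hB, Module.finrank_fintype_fun_eq_card] at this
    omega
  exact LinearMap.ker_eq_bot.mp (Submodule.finrank_eq_zero.mp hker)

theorem map_ofReal_smul (c : ℝ) (M : Matrix m n ℝ) :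
    (c • M).map Complex.ofReal = (c : ℂ) • M.map Complex.ofReal := by
  ext; simp

theorem map_ofReal_one [DecidableEq n] : (1 : Matrix n n ℝ).map Complex.ofReal = 1 :=
  Matrix.map_one _ Complex.ofReal_zero Complex.ofReal_one

variable [Fintype n]

theorem map_ofReal_mul {l : Type*} (M : Matrix l n ℝ) (N : Matrix n m ℝ) :
    (M * N).map Complex.ofReal = M.map Complex.ofReal * N.map Complex.ofReal :=
  Matrix.map_mul (f := Complex.ofRealHom)

theorem re_map_ofReal_mulVec (B : Matrix m n ℝ) (v : n → ℂ) (i : m) :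
    ((B.map Complex.ofReal *ᵥ v) i).re = (B *ᵥ fun j ↦ (v j).re) i := by
  simp [mulVec, dotProduct, Complex.re_sum]

theorem im_map_ofReal_mulVec (B : Matrix m n ℝ) (v : n → ℂ) (i : m) :
    ((B.map Complex.ofReal *ᵥ v) i).im = (B *ᵥ fun j ↦ (v j).im) i := by
  simp [mulVec, dotProduct, Complex.im_sum]

theorem mulVec_map_ofReal_injective {B : Matrix m n ℝ} (hB : Function.Injective B.mulVec) :
    Function.Injective (B.map Complex.ofReal).mulVec := by
  refine LinearMap.ker_eq_bot.mp
    ((ker_mulVecLin_eq_bot_iff (M := B.map Complex.ofReal)).mpr fun v hv ↦ ?_)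
  have hre : (fun j ↦ (v j).re) = 0 := hB.eq_iff' (mulVec_zero B) |>.mp <| by
    ext i; rw [← re_map_ofReal_mulVec, hv]; rfl
  have him : (fun j ↦ (v j).im) = 0 := hB.eq_iff' (mulVec_zero B) |>.mp <| by
    ext i; rw [← im_map_ofReal_mulVec, hv]; rfl
  funext j
  exact Complex.ext (congrFun hre j) (congrFun him j)

end Matrix

section SaddlePoint

variable {m n : Type*} [Fintype m] [Fintype n]

theorem saddlePoint_eigen_quadratic {R : Type*} [CommRing R] {A : Matrix m m R}
    {B : Matrix m n R} {C : Matrix n m R} {α β lam : R} {u : m → R} {v : n → R} (x : m → R)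
    (h₁ : α • u + A *ᵥ u + B *ᵥ v = lam • (α • u + (2 : R) • (A *ᵥ u) + (2 : R) • (B *ᵥ v)))
    (h₂ : -(C *ᵥ u) + β • v = lam • (-((2 : R) • (C *ᵥ u)) + β • v)) :
    lam ^ 2 * (α * β * (x ⬝ᵥ u) + 2 * β * (x ⬝ᵥ A *ᵥ u) + 4 * (x ⬝ᵥ (B * C) *ᵥ u))
      - lam * (2 * α * β * (x ⬝ᵥ u) + 3 * β * (x ⬝ᵥ A *ᵥ u) + 4 * (x ⬝ᵥ (B * C) *ᵥ u))
      + (α * β * (x ⬝ᵥ u) + β * (x ⬝ᵥ A *ᵥ u) + x ⬝ᵥ (B * C) *ᵥ u) = 0 := by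
  have e₁ := congrArg (x ⬝ᵥ ·) h₁
  have e₂ := congrArg (fun w ↦ x ⬝ᵥ B *ᵥ w) h₂
  simp only [dotProduct_add, dotProduct_smul, dotProduct_neg, mulVec_add, mulVec_smul,
    mulVec_neg, mulVec_mulVec, smul_eq_mul] at e₁ e₂
  linear_combination (β * (1 - lam)) * e₁ - (1 - 2 * lam) * e₂

theorem saddlePoint_eigen_fst_ne_zero {K : Type*} [Field K] {A : Matrix m m K}
    {B : Matrix m n K} {C : Matrix n m K} {α β lam : K} {u : m → K} {v : n → K}
    (hB : Function.Injective B.mulVec) (hβ : β ≠ 0) (hw : Sum.elim u v ≠ 0)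
    (h₁ : α • u + A *ᵥ u + B *ᵥ v = lam • (α • u + (2 : K) • (A *ᵥ u) + (2 : K) • (B *ᵥ v)))
    (h₂ : -(C *ᵥ u) + β • v = lam • (-((2 : K) • (C *ᵥ u)) + β • v)) :
    u ≠ 0 := by
  rintro rfl
  have hv : v ≠ 0 := by rintro rfl; exact hw Sum.elim_zero_zero
  simp only [smul_zero, mulVec_zero, neg_zero, zero_add] at h₁ h₂
  have hlam : lam = 1 := by
    have h : (1 - lam) • (β • v) = 0 := by rw [sub_smul, one_smul, ← h₂, sub_self]
    simp only [smul_eq_zero, hβ, hv, or_false, sub_eq_zero] at h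
    exact h.symm
  have hBv : B *ᵥ v = 0 := by
    rwa [hlam, one_smul, two_smul, left_eq_add] at h₁
  exact hv (hB.eq_iff' (mulVec_zero B) |>.mp hBv)

end SaddlePoint

section Complexification

variable {m n : ℕ} (A : Matrix (Fin m) (Fin m) ℝ) (B : Matrix (Fin m) (Fin n) ℝ) (α β : ℝ)
  (u : Fin m → ℂ) (v : Fin n → ℂ)

theorem Qmat_map_ofReal_mulVec :
    (Qmat A B α β).map Complex.ofReal *ᵥ Sum.elim u v =
      Sum.elim ((α : ℂ) • u + A.map Complex.ofReal *ᵥ u + B.map Complex.ofReal *ᵥ v)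
        (-((B.map Complex.ofReal)ᵀ *ᵥ u) + (β : ℂ) • v) := by
  simp only [Qmat, fromBlocks_map, fromBlocks_mulVec, Matrix.map_add _ Complex.ofReal_add,
    Matrix.map_neg _ Complex.ofReal_neg, map_ofReal_smul, map_ofReal_one, transpose_map,
    add_mulVec, smul_mulVec, one_mulVec, neg_mulVec, Sum.elim_comp_inl, Sum.elim_comp_inr]

theorem Pmat_map_ofReal_mulVec :
    (Pmat A B α β).map Complex.ofReal *ᵥ Sum.elim u v =
      Sum.elim ((α : ℂ) • u + (2 : ℂ) • (A.map Complex.ofReal *ᵥ u)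
          + (2 : ℂ) • (B.map Complex.ofReal *ᵥ v))
        (-((2 : ℂ) • ((B.map Complex.ofReal)ᵀ *ᵥ u)) + (β : ℂ) • v) := by
  simp only [Pmat, fromBlocks_map, fromBlocks_mulVec, Matrix.map_add _ Complex.ofReal_add,
    Matrix.map_neg _ Complex.ofReal_neg, map_ofReal_smul, map_ofReal_one, transpose_map,
    Complex.ofReal_ofNat, add_mulVec, smul_mulVec, one_mulVec, neg_mulVec, Sum.elim_comp_inl,
    Sum.elim_comp_inr]

end Complexification

theorem mgssp_eigenvalue_quadratic_general {m n : ℕ}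
    (A : Matrix (Fin m) (Fin m) ℝ) (B : Matrix (Fin m) (Fin n) ℝ)
    (hB : B.rank = n)
    (α β : ℝ) (hβ : 0 < β)
    (lam : ℂ) (u : Fin m → ℂ) (v : Fin n → ℂ) (hw : Sum.elim u v ≠ 0)
    (heig : (Qmat A B α β).map Complex.ofReal *ᵥ Sum.elim u v
        = lam • ((Pmat A B α β).map Complex.ofReal *ᵥ Sum.elim u v))
    (a b c : ℝ)
    (hab : (star u ⬝ᵥ (A.map Complex.ofReal *ᵥ u)) / (star u ⬝ᵥ u)
        = (a : ℂ) + (b : ℂ) * Complex.I)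
    (hc : (star u ⬝ᵥ ((B * Bᵀ).map Complex.ofReal *ᵥ u)) / (star u ⬝ᵥ u) = (c : ℂ)) :
    lam ^ 2 * ((α : ℂ) * β + 2 * β * a + 4 * c + 2 * β * b * Complex.I)
      - lam * (2 * (α : ℂ) * β + 3 * β * a + 4 * c + 3 * β * b * Complex.I)
      + ((α : ℂ) * β + β * a + c + β * b * Complex.I) = 0 := by
  rw [Qmat_map_ofReal_mulVec, Pmat_map_ofReal_mulVec, Sum.smul_elim, Sum.elim_eq_iff] at heig
  obtain ⟨h₁, h₂⟩ := heig
  have hBinj := mulVec_map_ofReal_injective (B := B)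
    (mulVec_injective_of_rank_eq_card (by rw [hB, Fintype.card_fin]))
  have hu := saddlePoint_eigen_fst_ne_zero hBinj (by exact_mod_cast hβ.ne') hw h₁ h₂
  have hs : star u ⬝ᵥ u ≠ 0 := by
    open ComplexOrder in exact fun h ↦ hu (dotProduct_star_self_eq_zero.mp h)
  have key := saddlePoint_eigen_quadratic (star u) h₁ h₂
  rw [← transpose_map, ← map_ofReal_mul, (div_eq_iff hs).mp hab, (div_eq_iff hs).mp hc] at key
  refine (mul_left_inj' hs).mp ?_
  linear_combination key

/-- Equation (11): an eigenvalue `λ` of the MGSSP iteration matrix satisfies the scalar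
quadratic equation `λ²(αβ + 2βa + 4c + 2βbi) − λ(2αβ + 3βa + 4c + 3βbi)
+ (αβ + βa + c + βbi) = 0`, where `a + ib` and `c` are the Rayleigh quotients of `A`
and `BBᵀ` at the first block component `u` of the eigenvector. -/
theorem mgssp_eigenvalue_quadratic {m n : ℕ}
    (A : Matrix (Fin m) (Fin m) ℝ) (B : Matrix (Fin m) (Fin n) ℝ)
    (hA : ∀ x : Fin m → ℝ, x ≠ 0 → 0 < x ⬝ᵥ (A *ᵥ x))
    (hB : B.rank = n)
    (α β : ℝ) (hα : 0 ≤ α) (hβ : 0 < β)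
    (lam : ℂ) (u : Fin m → ℂ) (v : Fin n → ℂ) (hw : Sum.elim u v ≠ 0)
    (heig : (Qmat A B α β).map Complex.ofReal *ᵥ Sum.elim u v
        = lam • ((Pmat A B α β).map Complex.ofReal *ᵥ Sum.elim u v))
    (a b c : ℝ)
    (hab : (star u ⬝ᵥ (A.map Complex.ofReal *ᵥ u)) / (star u ⬝ᵥ u)
        = (a : ℂ) + (b : ℂ) * Complex.I)
    (hc : (star u ⬝ᵥ ((B * Bᵀ).map Complex.ofReal *ᵥ u)) / (star u ⬝ᵥ u) = (c : ℂ)) :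
    lam ^ 2 * ((α : ℂ) * β + 2 * β * a + 4 * c + 2 * β * b * Complex.I)
      - lam * (2 * (α : ℂ) * β + 3 * β * a + 4 * c + 3 * β * b * Complex.I)
      + ((α : ℂ) * β + β * a + c + β * b * Complex.I) = 0 :=
  mgssp_eigenvalue_quadratic_general A B hB α β hβ lam u v hw heig a b c hab hc
end

section
/- Let A ∈ ℝ^{m×m} be positive definite, meaning xᵀAx > 0 for every nonzero x ∈ ℝ^m (A need not be symmetric), let B ∈ ℝ^{m×n} be rank deficient (rank B < n), and let α ≥ 0, β > 0. Then the MGSSP iteration matrix T(α,β) = P(α,β)⁻¹Q(α,β) satisfies index(I − T(α,β)) = 1, i.e., rank(I − T(α,β)) = rank((I − T(α,β))²). Equivalently, with 𝒜 = [[A, B], [−Bᵀ, 0]], the kernels coincide: for every x ∈ ℝ^{m+n}, (P(α,β)⁻¹𝒜)²x = 0 implies P(α,β)⁻¹𝒜 x = 0. -/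
open Matrix

/-- The saddle point matrix `𝒜 = [[A, B], [−Bᵀ, 0]]`. -/
noncomputable def Amat {m n : ℕ} (A : Matrix (Fin m) (Fin m) ℝ) (B : Matrix (Fin m) (Fin n) ℝ) :
    Matrix (Fin m ⊕ Fin n) (Fin m ⊕ Fin n) ℝ :=
  fromBlocks A B (-Bᵀ) 0

private lemma dot_transpose_aux {m n : ℕ} (B : Matrix (Fin m) (Fin n) ℝ)
    (u : Fin m → ℝ) (v : Fin n → ℝ) :
    u ⬝ᵥ (B *ᵥ v) = v ⬝ᵥ (Bᵀ *ᵥ u) := by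
  rw [dotProduct_mulVec, mulVec_transpose, dotProduct_comm]

private lemma fromBlocks_mulVec_inl {m n : ℕ}
    (M₁ : Matrix (Fin m) (Fin m) ℝ) (M₂ : Matrix (Fin m) (Fin n) ℝ)
    (M₃ : Matrix (Fin n) (Fin m) ℝ) (M₄ : Matrix (Fin n) (Fin n) ℝ)
    (x : Fin m ⊕ Fin n → ℝ) :
    (fromBlocks M₁ M₂ M₃ M₄ *ᵥ x) ∘ Sum.inl = M₁ *ᵥ (x ∘ Sum.inl) + M₂ *ᵥ (x ∘ Sum.inr) := by
  have hx : x = Sum.elim (x ∘ Sum.inl) (x ∘ Sum.inr) := (Sum.elim_comp_inl_inr x).symm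
  rw [hx, fromBlocks_mulVec]
  simp

private lemma fromBlocks_mulVec_inr {m n : ℕ}
    (M₁ : Matrix (Fin m) (Fin m) ℝ) (M₂ : Matrix (Fin m) (Fin n) ℝ)
    (M₃ : Matrix (Fin n) (Fin m) ℝ) (M₄ : Matrix (Fin n) (Fin n) ℝ)
    (x : Fin m ⊕ Fin n → ℝ) :
    (fromBlocks M₁ M₂ M₃ M₄ *ᵥ x) ∘ Sum.inr = M₃ *ᵥ (x ∘ Sum.inl) + M₄ *ᵥ (x ∘ Sum.inr) := by
  have hx : x = Sum.elim (x ∘ Sum.inl) (x ∘ Sum.inr) := (Sum.elim_comp_inl_inr x).symm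
  rw [hx, fromBlocks_mulVec]
  simp

private lemma dotProduct_self_nonneg' {k : ℕ} (v : Fin k → ℝ) : 0 ≤ v ⬝ᵥ v :=
  Finset.sum_nonneg fun i _ => mul_self_nonneg (v i)

/-- Lemma 4.2: for the singular saddle point problem (rank-deficient `B`), the MGSSP
iteration matrix `T(α,β) = P(α,β)⁻¹Q(α,β)` satisfies `index(I − T(α,β)) = 1`, i.e.
`rank(I − T) = rank((I − T)²)`; equivalently the kernels of `P⁻¹𝒜` and `(P⁻¹𝒜)²`
coincide. -/
theorem mgssp_index_one {m n : ℕ}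
    (A : Matrix (Fin m) (Fin m) ℝ) (B : Matrix (Fin m) (Fin n) ℝ)
    (hA : ∀ x : Fin m → ℝ, x ≠ 0 → 0 < x ⬝ᵥ (A *ᵥ x))
    (hB : B.rank < n)
    (α β : ℝ) (hα : 0 ≤ α) (hβ : 0 < β) :
    (1 - (Pmat A B α β)⁻¹ * Qmat A B α β).rank
        = ((1 - (Pmat A B α β)⁻¹ * Qmat A B α β) ^ 2).rank ∧
      ∀ x : Fin m ⊕ Fin n → ℝ,
        ((Pmat A B α β)⁻¹ * Amat A B) *ᵥ (((Pmat A B α β)⁻¹ * Amat A B) *ᵥ x) = 0 →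
          ((Pmat A B α β)⁻¹ * Amat A B) *ᵥ x = 0 := by
  set P := Pmat A B α β with hPdef
  -- P is injective as a linear map
  have hPker : ∀ x : Fin m ⊕ Fin n → ℝ, P *ᵥ x = 0 → x = 0 := by
    intro x hx
    set u := x ∘ Sum.inl with hu
    set v := x ∘ Sum.inr with hv
    have h1 : (α • (1 : Matrix (Fin m) (Fin m) ℝ) + (2:ℝ) • A) *ᵥ u + ((2:ℝ) • B) *ᵥ v = 0 := by
      rw [← fromBlocks_mulVec_inl _ _ (-((2:ℝ) • Bᵀ)) (β • 1) x]
      rw [show fromBlocks (α • 1 + (2:ℝ) • A) ((2:ℝ) • B) (-((2:ℝ) • Bᵀ)) (β • 1) *ᵥ x = 0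
        from hx]
      rfl
    have h2 : (-((2:ℝ) • Bᵀ)) *ᵥ u + (β • (1 : Matrix (Fin n) (Fin n) ℝ)) *ᵥ v = 0 := by
      rw [← fromBlocks_mulVec_inr (α • 1 + (2:ℝ) • A) ((2:ℝ) • B) _ _ x]
      rw [show fromBlocks (α • 1 + (2:ℝ) • A) ((2:ℝ) • B) (-((2:ℝ) • Bᵀ)) (β • 1) *ᵥ x = 0
        from hx]
      rfl
    have key : α * (u ⬝ᵥ u) + 2 * (u ⬝ᵥ (A *ᵥ u)) + β * (v ⬝ᵥ v) = 0 := by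
      have expand : u ⬝ᵥ ((α • (1 : Matrix (Fin m) (Fin m) ℝ) + (2:ℝ) • A) *ᵥ u
            + ((2:ℝ) • B) *ᵥ v)
          + v ⬝ᵥ ((-((2:ℝ) • Bᵀ)) *ᵥ u
            + (β • (1 : Matrix (Fin n) (Fin n) ℝ)) *ᵥ v)
          = α * (u ⬝ᵥ u) + 2 * (u ⬝ᵥ (A *ᵥ u)) + β * (v ⬝ᵥ v) := by
        simp only [add_mulVec, smul_mulVec, neg_mulVec, one_mulVec, dotProduct_add,
          dotProduct_smul, dotProduct_neg, smul_eq_mul, dot_transpose_aux B u v]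
        ring
      rw [← expand, h1, h2, dotProduct_zero, dotProduct_zero, add_zero]
    have hu0 : u = 0 := by
      by_contra huz
      have hpos := hA u huz
      have h1' := dotProduct_self_nonneg' u
      have h2' := dotProduct_self_nonneg' v
      nlinarith
    have hv0 : v = 0 := by
      rw [← dotProduct_self_eq_zero (v := v)]
      nlinarith [key, dotProduct_self_nonneg' v, hβ,
        show u ⬝ᵥ (A *ᵥ u) = 0 by rw [hu0, zero_dotProduct],
        show u ⬝ᵥ u = 0 by rw [hu0, zero_dotProduct]]
    funext i
    cases i with
    | inl i => exact congrFun hu0 i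
    | inr j => exact congrFun hv0 j
  have hPinj : Function.Injective P.mulVec := by
    intro a b hab
    have h0 : P *ᵥ (a - b) = 0 := by rw [mulVec_sub, hab, sub_self]
    exact sub_eq_zero.mp (hPker _ h0)
  have hdet : IsUnit P.det := (isUnit_iff_isUnit_det P).mp (mulVec_injective_iff_isUnit.mp hPinj)
  have hPPinv : P * P⁻¹ = 1 := mul_nonsing_inv P hdet
  have hPinvP : P⁻¹ * P = 1 := nonsing_inv_mul P hdet
  -- the kernel statement
  have hPN : ∀ z : Fin m ⊕ Fin n → ℝ,
      P *ᵥ ((P⁻¹ * Amat A B) *ᵥ z) = Amat A B *ᵥ z := by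
    intro z
    rw [mulVec_mulVec, ← mul_assoc, hPPinv, one_mul]
  have main : ∀ (x y : Fin m ⊕ Fin n → ℝ), Amat A B *ᵥ y = 0 →
      P *ᵥ y = Amat A B *ᵥ x → y = 0 := by
    intro x y hAy hPy
    set yu := y ∘ Sum.inl with hyu
    set yv := y ∘ Sum.inr with hyv
    have g1 : A *ᵥ yu + B *ᵥ yv = 0 := by
      rw [← fromBlocks_mulVec_inl A B (-Bᵀ) 0 y,
        show fromBlocks A B (-Bᵀ) 0 *ᵥ y = 0 from hAy]
      rfl
    have g2 : Bᵀ *ᵥ yu = 0 := by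
      have h := fromBlocks_mulVec_inr A B (-Bᵀ) 0 y
      rw [show fromBlocks A B (-Bᵀ) 0 *ᵥ y = 0 from hAy] at h
      have h' : (-Bᵀ) *ᵥ yu + (0 : Matrix (Fin n) (Fin n) ℝ) *ᵥ yv = 0 := by
        rw [← h]; rfl
      rw [zero_mulVec, add_zero, neg_mulVec, neg_eq_zero] at h'
      exact h'
    have hyu0 : yu = 0 := by
      by_contra hz
      have hpos := hA yu hz
      have hdot : yu ⬝ᵥ (A *ᵥ yu) = - (yu ⬝ᵥ (B *ᵥ yv)) := by
        have h := congrArg (fun w => yu ⬝ᵥ w) g1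
        simp only [dotProduct_add, dotProduct_zero] at h
        linarith
      rw [dot_transpose_aux B yu yv, g2, dotProduct_zero, neg_zero] at hdot
      rw [hdot] at hpos
      exact lt_irrefl 0 hpos
    have hByv : B *ᵥ yv = 0 := by
      have h := g1
      rw [hyu0, mulVec_zero, zero_add] at h
      exact h
    have hq : (-((2:ℝ) • Bᵀ)) *ᵥ yu + (β • (1 : Matrix (Fin n) (Fin n) ℝ)) *ᵥ yv
        = (-Bᵀ) *ᵥ (x ∘ Sum.inl) + (0 : Matrix (Fin n) (Fin n) ℝ) *ᵥ (x ∘ Sum.inr) := by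
      rw [← fromBlocks_mulVec_inr (α • 1 + (2:ℝ) • A) ((2:ℝ) • B) (-((2:ℝ) • Bᵀ)) (β • 1) y,
        ← fromBlocks_mulVec_inr A B (-Bᵀ) 0 x]
      rw [show fromBlocks (α • 1 + (2:ℝ) • A) ((2:ℝ) • B) (-((2:ℝ) • Bᵀ)) (β • 1) *ᵥ y
        = fromBlocks A B (-Bᵀ) 0 *ᵥ x from hPy]
    have hyv0 : yv = 0 := by
      rw [hyu0, mulVec_zero, zero_add, zero_mulVec, add_zero] at hq
      have hd : yv ⬝ᵥ ((β • (1 : Matrix (Fin n) (Fin n) ℝ)) *ᵥ yv)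
          = yv ⬝ᵥ ((-Bᵀ) *ᵥ (x ∘ Sum.inl)) := by rw [hq]
      rw [smul_mulVec, one_mulVec, dotProduct_smul, smul_eq_mul, neg_mulVec,
        dotProduct_neg, ← dot_transpose_aux B (x ∘ Sum.inl) yv, hByv, dotProduct_zero,
        neg_zero] at hd
      have hzz : yv ⬝ᵥ yv = 0 := by
        have hβ' : β ≠ 0 := ne_of_gt hβ
        exact (mul_eq_zero.mp hd).resolve_left hβ'
      exact dotProduct_self_eq_zero.mp hzz
    funext i
    cases i with
    | inl i => exact congrFun hyu0 i
    | inr j => exact congrFun hyv0 j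
  have key : ∀ x : Fin m ⊕ Fin n → ℝ,
      (P⁻¹ * Amat A B) *ᵥ ((P⁻¹ * Amat A B) *ᵥ x) = 0 →
        (P⁻¹ * Amat A B) *ᵥ x = 0 := by
    intro x hx
    refine main x _ ?_ (hPN x)
    rw [← hPN ((P⁻¹ * Amat A B) *ᵥ x), hx, mulVec_zero]
  refine ⟨?_, key⟩
  -- 1 - P⁻¹ Q = P⁻¹ 𝒜
  have hPQ : P - Qmat A B α β = Amat A B := by
    ext i j
    rcases i with i | i <;> rcases j with j | j <;>
      simp [hPdef, Pmat, Qmat, Amat, Matrix.sub_apply, Matrix.add_apply, Matrix.smul_apply,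
        smul_eq_mul] <;>
      ring
  have hM : 1 - P⁻¹ * Qmat A B α β = P⁻¹ * Amat A B := by
    rw [← hPQ, mul_sub, hPinvP]
  rw [hM]
  set N := P⁻¹ * Amat A B with hN
  have hcomp : (N ^ 2).mulVecLin = N.mulVecLin ∘ₗ N.mulVecLin := by
    rw [sq, mulVecLin_mul]
  have hker : LinearMap.ker (N.mulVecLin ∘ₗ N.mulVecLin) = LinearMap.ker N.mulVecLin := by
    ext z
    simp only [LinearMap.mem_ker, LinearMap.comp_apply, mulVecLin_apply]
    exact ⟨fun h => key z h, fun h => by rw [h, mulVec_zero]⟩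
  have h1 := LinearMap.finrank_range_add_finrank_ker N.mulVecLin
  have h2 := LinearMap.finrank_range_add_finrank_ker (N.mulVecLin ∘ₗ N.mulVecLin)
  rw [hker] at h2
  unfold Matrix.rank
  rw [hcomp]
  omega
end

section
/- Let A ∈ ℝ^{m×m} be positive definite, meaning xᵀAx > 0 for every nonzero x ∈ ℝ^m (A need not be symmetric), let B ∈ ℝ^{m×n}, and let α ≥ 0, β > 0. Suppose λ ∈ ℂ and w = (u, v) ∈ ℂ^{m+n} is nonzero with 𝒜w = λ P(α,β)w, and suppose Bᵀu ≠ 0. Then λ ≠ 0, u ≠ 0, and writing a₁ + ib₁ = (u*Au)/(u*u) with a₁, b₁ ∈ ℝ and c₁ = (u*BBᵀu)/(u*u) ∈ ℝ, λ satisfies the scalar quadratic equation λ²(αβ + 2βa₁ + 4c₁ + 2iβb₁) − λ(4c₁ + βa₁ + iβb₁) + c₁ = 0. -/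
open Matrix

/-- Theorem 5.1 (case `Bᵀu ≠ 0`): an eigenvalue `λ` of the MGSSP preconditioned matrix
whose eigenvector satisfies `Bᵀu ≠ 0` is nonzero, has `u ≠ 0`, and satisfies the scalar
quadratic equation `λ²(αβ + 2βa₁ + 4c₁ + 2iβb₁) − λ(4c₁ + βa₁ + iβb₁) + c₁ = 0`. -/
theorem mgssp_precond_eigenvalue_quadratic_of_BTu_ne_zero {m n : ℕ}
    (A : Matrix (Fin m) (Fin m) ℝ) (B : Matrix (Fin m) (Fin n) ℝ)
    (hA : ∀ x : Fin m → ℝ, x ≠ 0 → 0 < x ⬝ᵥ (A *ᵥ x))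
    (α β : ℝ) (hα : 0 ≤ α) (hβ : 0 < β)
    (lam : ℂ) (u : Fin m → ℂ) (v : Fin n → ℂ) (hw : Sum.elim u v ≠ 0)
    (heig : (Amat A B).map Complex.ofReal *ᵥ Sum.elim u v
        = lam • ((Pmat A B α β).map Complex.ofReal *ᵥ Sum.elim u v))
    (hBTu : Bᵀ.map Complex.ofReal *ᵥ u ≠ 0)
    (a₁ b₁ c₁ : ℝ)
    (hab : (star u ⬝ᵥ (A.map Complex.ofReal *ᵥ u)) / (star u ⬝ᵥ u)
        = (a₁ : ℂ) + (b₁ : ℂ) * Complex.I)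
    (hc : (star u ⬝ᵥ ((B * Bᵀ).map Complex.ofReal *ᵥ u)) / (star u ⬝ᵥ u) = (c₁ : ℂ)) :
    lam ≠ 0 ∧ u ≠ 0 ∧
      lam ^ 2 * ((α : ℂ) * β + 2 * β * a₁ + 4 * c₁ + 2 * Complex.I * β * b₁)
          - lam * (4 * (c₁ : ℂ) + β * a₁ + Complex.I * β * b₁) + (c₁ : ℂ) = 0 := by

  classical
  set A' := A.map Complex.ofReal with hA'
  set B' := B.map Complex.ofReal with hB'
  set Bt := Bᵀ.map Complex.ofReal with hBt
  have hmapA : ((Amat A B).map Complex.ofReal) = fromBlocks A' B' (-Bt) 0 := by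
    ext (i|i) (j|j) <;>
      simp [Amat, hA', hB', hBt, Matrix.map_apply, fromBlocks]
  have hmapP : ((Pmat A B α β).map Complex.ofReal)
      = fromBlocks ((α:ℂ) • 1 + (2:ℂ) • A') ((2:ℂ) • B') (-((2:ℂ) • Bt)) ((β:ℂ) • 1) := by
    ext (i|i) (j|j) <;>
      simp [Pmat, hA', hB', hBt, Matrix.map_apply, fromBlocks, Matrix.one_apply,
        apply_ite Complex.ofReal] <;> push_cast <;> ring
  rw [hmapA, hmapP, fromBlocks_mulVec, fromBlocks_mulVec] at heig
  have h1 : A' *ᵥ u + B' *ᵥ v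
      = lam • ((α:ℂ) • u + (2:ℂ) • (A' *ᵥ u) + (2:ℂ) • (B' *ᵥ v)) := by
    funext i
    have h := congrFun heig (Sum.inl i)
    simpa [Matrix.add_mulVec, Matrix.smul_mulVec, Matrix.one_mulVec,
      add_assoc] using h
  have h2 : -(Bt *ᵥ u)
      = lam • (-((2:ℂ) • (Bt *ᵥ u)) + (β:ℂ) • v) := by
    funext i
    have h := congrFun heig (Sum.inr i)
    simpa [Matrix.neg_mulVec, Matrix.smul_mulVec, Matrix.one_mulVec] using h
  have hlam : lam ≠ 0 := by
    rintro rfl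
    apply hBTu
    have := h2
    simp only [zero_smul] at this
    simpa [neg_eq_zero] using this
  have hu : u ≠ 0 := by
    rintro rfl
    exact hBTu (by simp)
  have hv : (lam * (β:ℂ)) • v = (2*lam - 1) • (Bt *ᵥ u) := by
    funext i
    have h := congrFun h2 i
    simp only [Pi.smul_apply, Pi.add_apply, Pi.neg_apply, smul_eq_mul] at h ⊢
    linear_combination -h
  set t := star u ⬝ᵥ u with htdef
  have ht : t ≠ 0 := by
    intro h
    apply hu
    have hsum : (∑ j, Complex.normSq (u j)) = 0 := by
      have h2 : ((∑ j, Complex.normSq (u j) : ℝ) : ℂ) = 0 := by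
        rw [← h, htdef]
        simp [dotProduct, Complex.normSq_eq_conj_mul_self]
      exact_mod_cast h2
    funext j
    have hj : Complex.normSq (u j) = 0 := by
      have := Finset.sum_eq_zero_iff_of_nonneg
        (fun i _ => Complex.normSq_nonneg (u i)) |>.mp hsum j (Finset.mem_univ j)
      exact this
    simpa using Complex.normSq_eq_zero.mp hj
  set S := star u ⬝ᵥ (A' *ᵥ u) with hSdef
  set C := star u ⬝ᵥ ((B * Bᵀ).map Complex.ofReal *ᵥ u) with hCdef
  set D := star u ⬝ᵥ (B' *ᵥ v) with hDdef
  have hS : S = ((a₁:ℂ) + (b₁:ℂ) * Complex.I) * t := (div_eq_iff ht).mp hab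
  have hC : C = (c₁:ℂ) * t := (div_eq_iff ht).mp hc
  have hBB : (B * Bᵀ).map Complex.ofReal = B' * Bt := by
    ext i j
    simp [Matrix.mul_apply, Matrix.map_apply, hA', hB', hBt]
  have hDC : lam * (β:ℂ) * D = (2*lam - 1) * C := by
    have h := congrArg (fun w => star u ⬝ᵥ (B' *ᵥ w)) hv
    simp only [Matrix.mulVec_smul, dotProduct_smul, smul_eq_mul,
      Matrix.mulVec_mulVec, ← hBB] at h
    linear_combination h
  have hSD : S + D = lam * ((α:ℂ) * t + 2 * S + 2 * D) := by
    have h := congrArg (fun w => star u ⬝ᵥ w) h1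
    simp only [dotProduct_add, dotProduct_smul, smul_eq_mul] at h
    linear_combination h
  refine ⟨hlam, hu, ?_⟩
  have key : (lam ^ 2 * ((α : ℂ) * β + 2 * β * a₁ + 4 * c₁ + 2 * Complex.I * β * b₁)
          - lam * (4 * (c₁ : ℂ) + β * a₁ + Complex.I * β * b₁) + (c₁ : ℂ)) * t = 0 := by
    linear_combination (-(lam*(β:ℂ))) * hSD - (2*lam-1) * hDC
      + (lam*(β:ℂ) - 2*(β:ℂ)*lam^2) * hS - (2*lam-1)^2 * hC
  rcases mul_eq_zero.mp key with h | h
  · exact h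
  · exact absurd h ht
end

section
/- Let A ∈ ℝ^{m×m} be positive definite, meaning xᵀAx > 0 for every nonzero x ∈ ℝ^m (A need not be symmetric), let B ∈ ℝ^{m×n} have full column rank (rank B = n), and let α ≥ 0, β > 0. Then every eigenvalue λ ∈ ℂ of the MGSSP preconditioned matrix (i.e., every λ for which there is a nonzero w ∈ ℂ^{m+n} with 𝒜w = λ P(α,β)w) has positive real part, Re(λ) > 0, and lies in the closed disk of radius 1/2 centered at 1/2: |λ − 1/2| ≤ 1/2. -/
open Matrix

/-!
Write `P(α,β) = 2𝒜 + D` with `D = diag(αI, βI) ⪰ 0`. Pairing `𝒜w = λ P(α,β) w` with `w*`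
gives `(1 - 2λ) s = λ d` for `s = w*𝒜w` and `d = w*Dw ≥ 0`. The off-diagonal blocks of `𝒜`
are skew, so `Re s = Re (u*Au)` for the first block `u` of `w`. If `u = 0`, the second block
row forces `λ = 0` and then `Bv = 0`, impossible for `B` of full column rank; hence `Re s > 0`.
Then `λ = s / q` and `(2λ - 1) q = -d` with `q = 2s + d`, and `d ≤ Re q ≤ ‖q‖` puts `2λ` in
the unit disk around `1`.
-/

lemma Complex.re_pos_and_norm_sub_half_le_of_mul_eq {lam s : ℂ} {d : ℝ} (hd : 0 ≤ d)
    (hs : 0 < s.re) (h : (1 - 2 * lam) * s = lam * d) :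
    0 < lam.re ∧ ‖lam - 1 / 2‖ ≤ 1 / 2 := by
  set q : ℂ := 2 * s + d with hq
  have hq_re : q.re = 2 * s.re + d := by simp [hq]
  have hq0 : q ≠ 0 := fun h0 => by
    have := congrArg Complex.re h0
    simp only [hq_re, Complex.zero_re] at this
    linarith
  have hlam : lam = s / q := by
    rw [eq_div_iff hq0]; linear_combination -h
  constructor
  · -- `Re (s / q) = Re (s * conj q) / ‖q‖²` and `Re (s * conj q) = 2 ‖s‖² + d * Re s`
    have hnum : 0 < s.re * q.re + s.im * q.im := by
      have hq_im : q.im = 2 * s.im := by simp [hq]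
      rw [hq_re, hq_im]; nlinarith [sq_nonneg s.im]
    rw [hlam, Complex.div_re, ← add_div]
    exact div_pos hnum (Complex.normSq_pos.mpr hq0)
  · have hdisk : (2 * lam - 1) * q = -d := by linear_combination -2 * h
    have hnorm : ‖2 * lam - 1‖ * ‖q‖ = d := by
      rw [← norm_mul, hdisk, norm_neg, Complex.norm_real, Real.norm_of_nonneg hd]
    have hd_le : d ≤ ‖q‖ := by linarith [Complex.re_le_norm q]
    have hdisk_norm : ‖2 * lam - 1‖ ≤ 1 :=
      le_of_mul_le_mul_right (by rwa [hnorm, one_mul]) (norm_pos_iff.mpr hq0)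
    calc ‖lam - 1 / 2‖ = ‖2 * lam - 1‖ / 2 := by
          rw [← Complex.norm_two, ← norm_div]; congr 1; ring
      _ ≤ 1 / 2 := by linarith

lemma Matrix.rank_eq_card_width_iff_mulVec_injective {ι κ K : Type*} [Fintype ι] [Fintype κ]
    [Field K] (B : Matrix ι κ K) :
    B.rank = Fintype.card κ ↔ Function.Injective B.mulVec := by
  rw [mulVec_injective_iff, linearIndependent_iff_card_eq_finrank_span,
    rank_eq_finrank_span_cols]
  exact eq_comm

section Complexification

variable {ι κ : Type*} [Fintype κ]

lemma Matrix.re_map_ofReal_mulVec_s14 (M : Matrix ι κ ℝ) (v : κ → ℂ) :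
    Complex.re ∘ (M.map Complex.ofReal *ᵥ v) = M *ᵥ (Complex.re ∘ v) := by
  ext i; simp [mulVec, dotProduct, Complex.re_sum]

lemma Matrix.im_map_ofReal_mulVec_s14 (M : Matrix ι κ ℝ) (v : κ → ℂ) :
    Complex.im ∘ (M.map Complex.ofReal *ᵥ v) = M *ᵥ (Complex.im ∘ v) := by
  ext i; simp [mulVec, dotProduct, Complex.im_sum]

lemma Matrix.map_ofReal_mulVec_injective {M : Matrix ι κ ℝ}
    (hM : Function.Injective M.mulVec) : Function.Injective (M.map Complex.ofReal).mulVec := by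
  intro v w h
  have hre := hM <| by simpa only [re_map_ofReal_mulVec_s14] using congrArg (Complex.re ∘ ·) h
  have him := hM <| by simpa only [im_map_ofReal_mulVec_s14] using congrArg (Complex.im ∘ ·) h
  exact funext fun j => Complex.ext (congrFun hre j) (congrFun him j)

lemma Complex.re_star_dotProduct (u z : κ → ℂ) :
    (star u ⬝ᵥ z).re = (re ∘ u) ⬝ᵥ (re ∘ z) + (im ∘ u) ⬝ᵥ (im ∘ z) := by
  simp [dotProduct, Complex.re_sum, Finset.sum_add_distrib]

lemma Matrix.re_star_dotProduct_map_ofReal_mulVec_s14 [Fintype ι] (M : Matrix ι ι ℝ) (w : ι → ℂ) :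
    (star w ⬝ᵥ (M.map Complex.ofReal *ᵥ w)).re =
      (Complex.re ∘ w) ⬝ᵥ (M *ᵥ (Complex.re ∘ w)) +
        (Complex.im ∘ w) ⬝ᵥ (M *ᵥ (Complex.im ∘ w)) := by
  rw [Complex.re_star_dotProduct, re_map_ofReal_mulVec_s14, im_map_ofReal_mulVec_s14]

lemma Matrix.re_star_dotProduct_map_ofReal_mulVec_pos_s14 [Fintype ι] {M : Matrix ι ι ℝ}
    (hM : ∀ x : ι → ℝ, x ≠ 0 → 0 < x ⬝ᵥ (M *ᵥ x)) {w : ι → ℂ} (hw : w ≠ 0) :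
    0 < (star w ⬝ᵥ (M.map Complex.ofReal *ᵥ w)).re := by
  have hM' (x : ι → ℝ) : 0 ≤ x ⬝ᵥ (M *ᵥ x) := by
    rcases eq_or_ne x 0 with rfl | hx
    · simp
    · exact (hM x hx).le
  rw [re_star_dotProduct_map_ofReal_mulVec_s14]
  by_cases hre : Complex.re ∘ w = 0
  · have him : Complex.im ∘ w ≠ 0 := fun him =>
      hw <| funext fun i => Complex.ext (congrFun hre i) (congrFun him i)
    linarith [hM' (Complex.re ∘ w), hM _ him]
  · linarith [hM _ hre, hM' (Complex.im ∘ w)]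

lemma Matrix.star_dotProduct_diagonal_map_ofReal_mulVec [Fintype ι] [DecidableEq ι]
    (d : ι → ℝ) (w : ι → ℂ) :
    star w ⬝ᵥ ((diagonal d).map Complex.ofReal *ᵥ w) =
      ((∑ i, d i * Complex.normSq (w i) : ℝ) : ℂ) := by
  simp only [diagonal_map Complex.ofReal_zero, mulVec_diagonal, dotProduct, Pi.star_apply,
    Complex.ofReal_sum, Complex.ofReal_mul, Complex.normSq_eq_conj_mul_self]
  refine Finset.sum_congr rfl fun i _ => ?_
  rw [Complex.star_def]; ring

end Complexification

section SaddlePoint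

variable {m n : ℕ} (A : Matrix (Fin m) (Fin m) ℝ) (B : Matrix (Fin m) (Fin n) ℝ)

noncomputable def Dmat (m n : ℕ) (α β : ℝ) : Matrix (Fin m ⊕ Fin n) (Fin m ⊕ Fin n) ℝ :=
  diagonal (Sum.elim (fun _ => α) (fun _ => β))

lemma Pmat_eq_two_smul_Amat_add_Dmat (α β : ℝ) :
    Pmat A B α β = (2 : ℝ) • Amat A B + Dmat m n α β := by
  rw [Pmat, Amat, Dmat, ← fromBlocks_diagonal, fromBlocks_smul, fromBlocks_add]
  congr 1
  · rw [add_comm, ← smul_one_eq_diagonal]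
  · simp
  · simp
  · rw [smul_zero, zero_add, ← smul_one_eq_diagonal]

lemma Amat_dotProduct_mulVec_self (x : Fin m ⊕ Fin n → ℝ) :
    x ⬝ᵥ (Amat A B *ᵥ x) = (x ∘ Sum.inl) ⬝ᵥ (A *ᵥ (x ∘ Sum.inl)) := by
  rw [← Sum.elim_comp_inl_inr x, Amat, fromBlocks_mulVec, sumElim_dotProduct_sumElim]
  simp [dotProduct_add, neg_mulVec, dotProduct_mulVec _ Bᵀ, vecMul_transpose, dotProduct_comm]

lemma Amat_map_ofReal_mulVec (w : Fin m ⊕ Fin n → ℂ) :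
    (Amat A B).map Complex.ofReal *ᵥ w =
      Sum.elim (A.map Complex.ofReal *ᵥ (w ∘ Sum.inl) + B.map Complex.ofReal *ᵥ (w ∘ Sum.inr))
        (-((B.map Complex.ofReal)ᵀ *ᵥ (w ∘ Sum.inl))) := by
  simp [Amat, fromBlocks_map, fromBlocks_mulVec, Matrix.map_neg, ← transpose_map, neg_mulVec]

lemma re_star_dotProduct_Amat_map_ofReal_mulVec (w : Fin m ⊕ Fin n → ℂ) :
    (star w ⬝ᵥ ((Amat A B).map Complex.ofReal *ᵥ w)).re =
      (star (w ∘ Sum.inl) ⬝ᵥ (A.map Complex.ofReal *ᵥ (w ∘ Sum.inl))).re := by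
  rw [re_star_dotProduct_map_ofReal_mulVec_s14, re_star_dotProduct_map_ofReal_mulVec_s14,
    Amat_dotProduct_mulVec_self, Amat_dotProduct_mulVec_self]
  rfl

variable {α β : ℝ}

lemma Dmat_map_ofReal_mulVec (w : Fin m ⊕ Fin n → ℂ) :
    (Dmat m n α β).map Complex.ofReal *ᵥ w =
      Sum.elim ((α : ℂ) • (w ∘ Sum.inl)) ((β : ℂ) • (w ∘ Sum.inr)) := by
  ext (i | j) <;> simp [Dmat, diagonal_map, mulVec_diagonal]

lemma Pmat_map_ofReal_mulVec_s14 (w : Fin m ⊕ Fin n → ℂ) :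
    (Pmat A B α β).map Complex.ofReal *ᵥ w =
      (2 : ℂ) • ((Amat A B).map Complex.ofReal *ᵥ w) +
        (Dmat m n α β).map Complex.ofReal *ᵥ w := by
  rw [Pmat_eq_two_smul_Amat_add_Dmat]
  simp [Matrix.map_add, two_smul, add_mulVec]

lemma exists_star_dotProduct_Dmat_map_ofReal_mulVec_eq (hα : 0 ≤ α) (hβ : 0 ≤ β)
    (w : Fin m ⊕ Fin n → ℂ) :
    ∃ d : ℝ, 0 ≤ d ∧ star w ⬝ᵥ ((Dmat m n α β).map Complex.ofReal *ᵥ w) = d :=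
  ⟨_, Finset.sum_nonneg fun k _ =>
      mul_nonneg (by rcases k <;> assumption) (Complex.normSq_nonneg _),
    star_dotProduct_diagonal_map_ofReal_mulVec _ w⟩

lemma comp_inl_ne_zero_of_smul_Amat_mulVec_eq (hB : Function.Injective B.mulVec) (hβ : β ≠ 0)
    {lam : ℂ} {w : Fin m ⊕ Fin n → ℂ} (hw : w ≠ 0)
    (h : (1 - 2 * lam) • ((Amat A B).map Complex.ofReal *ᵥ w) =
      lam • ((Dmat m n α β).map Complex.ofReal *ᵥ w)) :
    w ∘ Sum.inl ≠ 0 := by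
  intro hu
  have hv : w ∘ Sum.inr ≠ 0 := fun hv =>
    hw <| by rw [← Sum.elim_comp_inl_inr w, hu, hv, Sum.elim_zero_zero]
  rw [Amat_map_ofReal_mulVec, Dmat_map_ofReal_mulVec, hu] at h
  obtain ⟨j, hj : w (Sum.inr j) ≠ 0⟩ := Function.ne_iff.mp hv
  have hlam : lam = 0 := by
    simpa [hβ, hj] using congrFun h (Sum.inr j)
  have hBv : B.map Complex.ofReal *ᵥ (w ∘ Sum.inr) = 0 := by
    ext i
    simpa [hlam] using congrFun h (Sum.inl i)
  exact hv <| map_ofReal_mulVec_injective hB (hBv.trans (mulVec_zero _).symm)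

end SaddlePoint

/-- Remark 5.1: every eigenvalue of the MGSSP preconditioned matrix has positive real
part and lies in the closed disk of radius `1/2` centered at `1/2`. -/
theorem mgssp_precond_eigenvalues_in_disk {m n : ℕ}
    (A : Matrix (Fin m) (Fin m) ℝ) (B : Matrix (Fin m) (Fin n) ℝ)
    (hA : ∀ x : Fin m → ℝ, x ≠ 0 → 0 < x ⬝ᵥ (A *ᵥ x))
    (hB : B.rank = n)
    (α β : ℝ) (hα : 0 ≤ α) (hβ : 0 < β)
    (lam : ℂ) (w : Fin m ⊕ Fin n → ℂ) (hw : w ≠ 0)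
    (heig : (Amat A B).map Complex.ofReal *ᵥ w
        = lam • ((Pmat A B α β).map Complex.ofReal *ᵥ w)) :
    0 < lam.re ∧ ‖lam - 1 / 2‖ ≤ 1 / 2 := by
  have hB_inj : Function.Injective B.mulVec :=
    (rank_eq_card_width_iff_mulVec_injective B).mp (by simpa using hB)
  have heig' : (1 - 2 * lam) • ((Amat A B).map Complex.ofReal *ᵥ w) =
      lam • ((Dmat m n α β).map Complex.ofReal *ᵥ w) := by
    rw [Pmat_map_ofReal_mulVec_s14] at heig
    linear_combination (norm := module) heig
  have hu := comp_inl_ne_zero_of_smul_Amat_mulVec_eq A B hB_inj hβ.ne' hw heig'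
  obtain ⟨d, hd, hDw⟩ := exists_star_dotProduct_Dmat_map_ofReal_mulVec_eq hα hβ.le w
  refine Complex.re_pos_and_norm_sub_half_le_of_mul_eq hd ?_
    (by simpa [dotProduct_smul, hDw] using congrArg (star w ⬝ᵥ ·) heig')
  rw [re_star_dotProduct_Amat_map_ofReal_mulVec]
  exact re_star_dotProduct_map_ofReal_mulVec_pos_s14 hA hu
end

section
/- Let a, b, c, α, β ∈ ℝ with a > 0, c ≥ 0, α ≥ 0 and β > 0. Then (αβ + 2βa)² + (β|b| + √(β²b² + 4αβc))² ≤ (αβ + 2βa + 4c)² + 4β²b². -/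
/-- The algebraic inequality in Remark 5.1 showing that all eigenvalues of the MGSSP
preconditioned matrix lie in the disk of radius `1/2` centered at `1/2`. -/
theorem mgssp_disk_inequality (a b c α β : ℝ)
    (ha : 0 < a) (hc : 0 ≤ c) (hα : 0 ≤ α) (hβ : 0 < β) :
    (α * β + 2 * β * a) ^ 2
        + (β * |b| + Real.sqrt (β ^ 2 * b ^ 2 + 4 * α * β * c)) ^ 2
      ≤ (α * β + 2 * β * a + 4 * c) ^ 2 + 4 * β ^ 2 * b ^ 2 := by
  set s := Real.sqrt (β ^ 2 * b ^ 2 + 4 * α * β * c) with hs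
  have hs2 : s ^ 2 = β ^ 2 * b ^ 2 + 4 * α * β * c := by
    rw [hs, Real.sq_sqrt]; positivity
  have hb : |b| ^ 2 = b ^ 2 := sq_abs b
  have h2 : 2 * (β * |b|) * s ≤ (β * |b|) ^ 2 + s ^ 2 := two_mul_le_add_sq _ _
  nlinarith [abs_nonneg b, Real.sqrt_nonneg (β ^ 2 * b ^ 2 + 4 * α * β * c),
    mul_nonneg (mul_nonneg hα hβ.le) hc, mul_nonneg (mul_nonneg hβ.le ha.le) hc,
    sq_nonneg c, sq_nonneg (β * b)]
end

section
/- Let a, b, c, α, β ∈ ℝ with a > 0, c ≥ 0, α ≥ 0 and β > 0, and set D = √((β²(a² − b²) − 4αβc)² + 4β⁴a²b²). Then √((D + β²(a² − b²) − 4αβc)/2) ≤ βa and √((D − β²(a² − b²) + 4αβc)/2) ≤ √(β²b² + 4αβc). -/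
/-- Bounds (30) and (31) in Theorem 5.1: with
`D = √((β²(a² − b²) − 4αβc)² + 4β⁴a²b²)`, the real part `z₁` and the absolute value of
the imaginary part `z₂` of the square root of `β²(a² − b²) − 4αβc + 2iβ²ab` satisfy
`z₁ ≤ βa` and `|z₂| ≤ √(β²b² + 4αβc)`. -/
theorem mgssp_sqrt_bounds (a b c α β : ℝ)
    (ha : 0 < a) (hc : 0 ≤ c) (hα : 0 ≤ α) (hβ : 0 < β) :
    Real.sqrt ((Real.sqrt ((β ^ 2 * (a ^ 2 - b ^ 2) - 4 * α * β * c) ^ 2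
            + 4 * β ^ 4 * a ^ 2 * b ^ 2)
          + β ^ 2 * (a ^ 2 - b ^ 2) - 4 * α * β * c) / 2) ≤ β * a ∧
      Real.sqrt ((Real.sqrt ((β ^ 2 * (a ^ 2 - b ^ 2) - 4 * α * β * c) ^ 2
            + 4 * β ^ 4 * a ^ 2 * b ^ 2)
          - β ^ 2 * (a ^ 2 - b ^ 2) + 4 * α * β * c) / 2)
        ≤ Real.sqrt (β ^ 2 * b ^ 2 + 4 * α * β * c) := by
  set E := β ^ 2 * (a ^ 2 - b ^ 2) - 4 * α * β * c with hE
  set M := β ^ 2 * a ^ 2 + β ^ 2 * b ^ 2 + 4 * α * β * c with hMdef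
  have hM : 0 ≤ M := by positivity
  have hD : Real.sqrt (E ^ 2 + 4 * β ^ 4 * a ^ 2 * b ^ 2) ≤ M := by
    have h1 : E ^ 2 + 4 * β ^ 4 * a ^ 2 * b ^ 2 ≤ M ^ 2 := by
      rw [hE, hMdef]
      nlinarith [mul_nonneg (mul_nonneg (mul_nonneg hα hβ.le) hc) (mul_pos (mul_pos hβ hβ) (mul_pos ha ha)).le]
    calc Real.sqrt (E ^ 2 + 4 * β ^ 4 * a ^ 2 * b ^ 2) ≤ Real.sqrt (M ^ 2) :=
          Real.sqrt_le_sqrt h1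
      _ = M := Real.sqrt_sq hM
  constructor
  · have h2 : (Real.sqrt (E ^ 2 + 4 * β ^ 4 * a ^ 2 * b ^ 2) + β ^ 2 * (a ^ 2 - b ^ 2)
        - 4 * α * β * c) / 2 ≤ (β * a) ^ 2 := by nlinarith
    calc Real.sqrt _ ≤ Real.sqrt ((β * a) ^ 2) := Real.sqrt_le_sqrt h2
      _ = β * a := Real.sqrt_sq (by positivity)
  · apply Real.sqrt_le_sqrt
    nlinarith
end

section
/- Let A ∈ ℝ^{m×m} and B ∈ ℝ^{m×n} be arbitrary real matrices and let β > 0. With α = 0, for every u ∈ ℝ^m the vector w = (u, 0) ∈ ℝ^{m+n} satisfies 𝒜w = (1/2) P(0,β) w, where 𝒜 = [[A, B], [−Bᵀ, 0]] and P(0,β) = [[2A, 2B], [−2Bᵀ, βI]]. In particular, every nonzero vector of the form (u, 0) is an eigenvector of the MGSSP preconditioned matrix P(0,β)⁻¹𝒜 corresponding to the eigenvalue 1/2, so 1/2 is an eigenvalue with at least m linearly independent eigenvectors. -/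
open Matrix

/-- Theorem 5.2, case 1): when `α = 0`, every vector of the form `(u, 0)` satisfies
`𝒜w = (1/2)P(0,β)w`, so `1/2` is an eigenvalue of the MGSSP preconditioned matrix
with at least `m` linearly independent eigenvectors. -/
theorem mgssp_precond_half_eigenvectors {m n : ℕ}
    (A : Matrix (Fin m) (Fin m) ℝ) (B : Matrix (Fin m) (Fin n) ℝ)
    (β : ℝ) (hβ : 0 < β) :
    (∀ u : Fin m → ℝ,
        Amat A B *ᵥ Sum.elim u 0 = (1 / 2 : ℝ) • (Pmat A B 0 β *ᵥ Sum.elim u 0)) ∧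
      ∃ f : Fin m → (Fin m ⊕ Fin n → ℝ), LinearIndependent ℝ f ∧
        ∀ l : Fin m, f l ≠ 0 ∧
          Amat A B *ᵥ f l = (1 / 2 : ℝ) • (Pmat A B 0 β *ᵥ f l) := by
  constructor
  · intro u
    funext i
    cases i <;>
      simp [Amat, Pmat, fromBlocks_mulVec, smul_mulVec, neg_mulVec, smul_smul]
  · refine ⟨fun l => Sum.elim (Pi.single l 1) 0, ?_, ?_⟩
    · have h : LinearIndependent ℝ (fun l : Fin m =>
          (LinearMap.funLeft ℝ ℝ (Sum.inl : Fin m → Fin m ⊕ Fin n))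
            (Sum.elim (Pi.single l 1) 0)) := by
        have hb := (Pi.basisFun ℝ (Fin m)).linearIndependent
        have he : (fun l : Fin m => (LinearMap.funLeft ℝ ℝ (Sum.inl : Fin m → Fin m ⊕ Fin n))
            (Sum.elim (Pi.single l 1) 0)) = ⇑(Pi.basisFun ℝ (Fin m)) := by
          funext l; ext i
          simp [LinearMap.funLeft, Pi.basisFun_apply, Pi.single_apply]
        rw [he]; exact hb
      exact h.of_comp _
    · intro l
      constructor
      · intro h
        have := congrFun h (Sum.inl l)
        simp at this
      · funext i
        cases i <;>
          simp [Amat, Pmat, fromBlocks_mulVec, smul_mulVec, neg_mulVec, smul_smul]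
end
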